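/- The Cantor–Lebesgue measure μ (induced by the Cantor function) coincides with the normalized s-dimensional Hausdorff measure restricted to the middle-thirds Cantor set C, where s = log 2 / log 3; in particular 0 < H^s(C) < ∞. -/

import Mathlib

/-!
Let `T₀ x = x / 3` and `T₁ x = (2 + x) / 3`, so that `C = T₀ C ⊔ T₁ C`. Both `μ` and
`ν = H^s|_C / H^s(C)` are fixed points of `ρ ↦ ½ (T₀)_* ρ + ½ (T₁)_* ρ`: for `μ` this is the
functional equation `f(x) = (f(3x) + f(3x - 2)) / 2` of the Cantor function, for `ν` the
decomposition of `C` together with `H^s(T_b A) = 3^{-s} H^s(A) = H^s(A) / 2`. The distribution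
function of such a fixed point carried by `[0, 1]` solves the same functional equation, and two
bounded solutions differ by at most `2^{-n}` everywhere, since at each ternary scale one half of the
equation cancels; hence `μ = ν`. The same estimate makes the solution `s`-Hölder, so
`μ(A) ≤ 2 diam(A)^s` and the mass distribution principle gives `H^s(C) ≥ 1/2`, while covering `C`
by its `2^n` pieces of diameter `3^{-n}` gives `H^s(C) ≤ 1`.
-/

open Set MeasureTheory

/-- The Cantor (devil's staircase) function of the middle-thirds Cantor set. -/
noncomputable def cantorFun (x : ℝ) : ℝ :=
  sSup {y | ∃ a : ℕ → ℕ, (∀ n, a n ≤ 1) ∧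
    y = ∑' n, (a n : ℝ) / 2 ^ (n + 1) ∧ (∑' n, (2 * a n : ℝ) / 3 ^ (n + 1)) ≤ x}

open Filter ProbabilityTheory
open scoped ENNReal NNReal Topology

noncomputable def cantorDim : ℝ := Real.log 2 / Real.log 3

lemma cantorDim_pos : 0 < cantorDim :=
  div_pos (Real.log_pos one_lt_two) (Real.log_pos (by norm_num))

lemma three_rpow_cantorDim : (3 : ℝ) ^ cantorDim = 2 := by
  rw [cantorDim, Real.rpow_def_of_pos (by norm_num),
    mul_div_cancel₀ _ (Real.log_pos (by norm_num : (1 : ℝ) < 3)).ne', Real.exp_log two_pos]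

lemma inv_three_rpow_cantorDim : (3 : ℝ)⁻¹ ^ cantorDim = 2⁻¹ := by
  rw [Real.inv_rpow (by norm_num), three_rpow_cantorDim]

lemma inv_three_pow_rpow_cantorDim (n : ℕ) : ((3 : ℝ)⁻¹ ^ n) ^ cantorDim = 2⁻¹ ^ n := by
  rw [← Real.rpow_natCast, ← Real.rpow_mul (by norm_num), mul_comm, Real.rpow_mul (by norm_num),
    inv_three_rpow_cantorDim, Real.rpow_natCast]

structure CantorEquation (F : ℝ → ℝ) : Prop where
  nonneg : ∀ x, 0 ≤ F x
  le_one : ∀ x, F x ≤ 1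
  eq_zero : ∀ x < 0, F x = 0
  eq_one : ∀ x, 1 ≤ x → F x = 1
  eq_half_add : ∀ x, F x = (F (3 * x) + F (3 * x - 2)) / 2

namespace CantorEquation

variable {F G : ℝ → ℝ}

/-- At distance at most `1/3`, either both `3a, 3b ≥ 1` or both `3a - 2, 3b - 2 < 0`, so one of the
two halves of the functional equation cancels and each ternary scale halves the bound. -/
lemma sub_le_inv_two_pow (hF : CantorEquation F) (hG : CantorEquation G) :
    ∀ (n : ℕ) {a b : ℝ}, |b - a| ≤ 3⁻¹ ^ n → F b - G a ≤ 2⁻¹ ^ n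
  | 0, a, b, _ => by linarith [hF.le_one b, hG.nonneg a, pow_zero (2⁻¹ : ℝ)]
  | n + 1, a, b, hab => by
    have hab' : |3 * b - 3 * a| ≤ 3⁻¹ ^ n := by
      rw [← mul_sub, abs_mul, abs_of_pos three_pos]
      rw [pow_succ] at hab
      linarith
    have hab'' : |(3 * b - 2) - (3 * a - 2)| ≤ 3⁻¹ ^ n := by rwa [sub_sub_sub_cancel_right]
    have hsmall : |b - a| ≤ 3⁻¹ :=
      hab.trans (pow_le_of_le_one (by norm_num) (by norm_num) n.succ_ne_zero)
    rw [hF.eq_half_add b, hG.eq_half_add a, pow_succ]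
    rcases le_or_gt 1 (min (3 * a) (3 * b)) with h | h
    · rw [hF.eq_one (3 * b) (h.trans (min_le_right _ _)),
        hG.eq_one (3 * a) (h.trans (min_le_left _ _))]
      linarith [sub_le_inv_two_pow hF hG n hab'']
    · have hmax : max (3 * a) (3 * b) < 2 := by
        rw [abs_le] at hsmall
        rcases min_lt_iff.1 h with h | h <;> refine max_lt ?_ ?_ <;> linarith
      rw [hF.eq_zero (3 * b - 2) (by linarith [le_max_right (3 * a) (3 * b)]),
        hG.eq_zero (3 * a - 2) (by linarith [le_max_left (3 * a) (3 * b)])]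
      linarith [sub_le_inv_two_pow hF hG n hab']

theorem unique (hF : CantorEquation F) (hG : CantorEquation G) : F = G := by
  have key : ∀ {F G : ℝ → ℝ}, CantorEquation F → CantorEquation G → ∀ x, F x ≤ G x :=
    fun hF hG x ↦ sub_nonpos.1 <| ge_of_tendsto'
      (tendsto_pow_atTop_nhds_zero_of_lt_one (by norm_num) (by norm_num : (2⁻¹ : ℝ) < 1))
      fun n ↦ hF.sub_le_inv_two_pow hG n (by simp)
  exact funext fun x => (key hF hG x).antisymm (key hG hF x)

lemma abs_sub_le_two_mul_rpow (hF : CantorEquation F) (x y : ℝ) :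
    |F x - F y| ≤ 2 * |x - y| ^ cantorDim := by
  have hbound : ∀ n : ℕ, |x - y| ≤ 3⁻¹ ^ n → |F x - F y| ≤ 2⁻¹ ^ n := fun n h ↦
    abs_sub_le_iff.2
      ⟨hF.sub_le_inv_two_pow hF n h, hF.sub_le_inv_two_pow hF n (by rwa [abs_sub_comm])⟩
  rcases eq_or_lt_of_le (abs_nonneg (x - y)) with h | hpos
  · obtain rfl : x = y := sub_eq_zero.1 (abs_eq_zero.1 h.symm)
    simpa using Real.rpow_nonneg le_rfl cantorDim
  rcases le_or_gt |x - y| 1 with h1 | h1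
  · obtain ⟨n, hn, hn'⟩ :=
      exists_nat_pow_near ((one_le_inv₀ hpos).2 h1) (by norm_num : (1 : ℝ) < 3)
    have hle : |x - y| ≤ 3⁻¹ ^ n := by
      rw [inv_pow]; exact (le_inv_comm₀ (by positivity) hpos).1 hn
    have hlt : (3 : ℝ)⁻¹ ^ (n + 1) < |x - y| := by
      rw [inv_pow]; exact (inv_lt_comm₀ hpos (by positivity)).1 hn'
    calc |F x - F y| ≤ 2⁻¹ ^ n := hbound n hle
      _ = 2 * ((3 : ℝ)⁻¹ ^ (n + 1)) ^ cantorDim := by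
        rw [inv_three_pow_rpow_cantorDim, pow_succ]; ring
      _ ≤ 2 * |x - y| ^ cantorDim := by gcongr; exact cantorDim_pos.le
  · have := Real.one_le_rpow h1.le cantorDim_pos.le
    linarith [abs_sub_le_of_nonneg_of_le (hF.nonneg x) (hF.le_one x) (hF.nonneg y) (hF.le_one y)]

lemma holderWith (hF : CantorEquation F) : HolderWith 2 ⟨cantorDim, cantorDim_pos.le⟩ F := by
  intro x y
  have h := ENNReal.ofReal_le_ofReal (hF.abs_sub_le_two_mul_rpow x y)
  rw [ENNReal.ofReal_mul zero_le_two, ENNReal.ofReal_ofNat,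
    ← ENNReal.ofReal_rpow_of_nonneg (abs_nonneg _) cantorDim_pos.le] at h
  simp only [edist_dist, Real.dist_eq, ENNReal.coe_ofNat]
  exact h

end CantorEquation

section CantorFunction

lemma summable_div_pow_succ {r M : ℝ} (hr : 1 < r) {d : ℕ → ℝ} (hd : ∀ n, |d n| ≤ M) :
    Summable fun n ↦ d n / r ^ (n + 1) := by
  have hr0 : 0 < r := one_pos.trans hr
  refine Summable.of_norm_bounded ((summable_geometric_of_lt_one (inv_nonneg.2 hr0.le)
    (inv_lt_one_of_one_lt₀ hr)).mul_left (M / r)) fun n ↦ ?_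
  rw [norm_div, norm_pow, Real.norm_eq_abs, Real.norm_eq_abs, abs_of_pos hr0, inv_pow,
    ← div_eq_mul_inv, div_div, ← pow_succ']
  exact div_le_div_of_nonneg_right (hd n) (by positivity)

lemma tsum_div_pow_succ_eq {r M : ℝ} (hr : 1 < r) {d : ℕ → ℝ} (hd : ∀ n, |d n| ≤ M) :
    ∑' n, d n / r ^ (n + 1) = (d 0 + ∑' n, d (n + 1) / r ^ (n + 1)) / r := by
  rw [(summable_div_pow_succ hr hd).tsum_eq_zero_add, add_div, ← tsum_div_const, zero_add, pow_one]
  simp only [pow_succ _ (_ + 1), div_div]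

noncomputable def binaryValue (a : ℕ → ℕ) : ℝ := ∑' n, (a n : ℝ) / 2 ^ (n + 1)

noncomputable def ternaryValue (a : ℕ → ℕ) : ℝ := ∑' n, (2 * a n : ℝ) / 3 ^ (n + 1)

def consDigit (c : ℕ) (a : ℕ → ℕ) : ℕ → ℕ
  | 0 => c
  | n + 1 => a n

variable {a : ℕ → ℕ}

lemma abs_digit_le (ha : ∀ n, a n ≤ 1) (n : ℕ) : |(a n : ℝ)| ≤ 1 := by
  rw [Nat.abs_cast]; exact_mod_cast ha n

lemma binaryValue_eq (ha : ∀ n, a n ≤ 1) :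
    binaryValue a = (a 0 + binaryValue fun n ↦ a (n + 1)) / 2 :=
  tsum_div_pow_succ_eq one_lt_two (abs_digit_le ha)

lemma ternaryValue_eq (ha : ∀ n, a n ≤ 1) :
    ternaryValue a = (2 * a 0 + ternaryValue fun n ↦ a (n + 1)) / 3 :=
  tsum_div_pow_succ_eq (M := 2) (by norm_num) fun n ↦ by
    rw [abs_mul, abs_two]; linarith [abs_digit_le ha n]

lemma binaryValue_nonneg (a : ℕ → ℕ) : 0 ≤ binaryValue a := tsum_nonneg fun _ ↦ by positivity

lemma ternaryValue_nonneg (a : ℕ → ℕ) : 0 ≤ ternaryValue a := tsum_nonneg fun _ ↦ by positivity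

lemma binaryValue_one : binaryValue (fun _ ↦ 1) = 1 := by
  have := binaryValue_eq (a := fun _ ↦ 1) fun _ ↦ le_rfl
  push_cast at this
  linarith

lemma ternaryValue_one : ternaryValue (fun _ ↦ 1) = 1 := by
  have := ternaryValue_eq (a := fun _ ↦ 1) fun _ ↦ le_rfl
  push_cast at this
  linarith

lemma binaryValue_le_one (ha : ∀ n, a n ≤ 1) : binaryValue a ≤ 1 :=
  binaryValue_one ▸ Summable.tsum_le_tsum (fun n ↦ by gcongr; exact_mod_cast ha n)
    (summable_div_pow_succ one_lt_two (abs_digit_le ha))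
    (summable_div_pow_succ one_lt_two (abs_digit_le fun _ ↦ le_rfl))

lemma le_cantorFun (ha : ∀ n, a n ≤ 1) {x : ℝ} (hx : ternaryValue a ≤ x) :
    binaryValue a ≤ cantorFun x :=
  le_csSup ⟨1, by rintro _ ⟨b, hb, rfl, -⟩; exact binaryValue_le_one hb⟩ ⟨a, ha, rfl, hx⟩

lemma cantorFun_le {x c : ℝ} (hc : 0 ≤ c)
    (h : ∀ a : ℕ → ℕ, (∀ n, a n ≤ 1) → ternaryValue a ≤ x → binaryValue a ≤ c) :
    cantorFun x ≤ c :=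
  Real.sSup_le (by rintro _ ⟨a, ha, rfl, hx⟩; exact h a ha hx) hc

lemma half_add_le_cantorFun {c : ℕ} (hc : c ≤ 1) (ha : ∀ n, a n ≤ 1) {x : ℝ}
    (hx : ternaryValue a ≤ 3 * x - 2 * c) : (c + binaryValue a) / 2 ≤ cantorFun x := by
  have hca : ∀ n, consDigit c a n ≤ 1 := fun | 0 => hc | n + 1 => ha n
  refine (binaryValue_eq hca).symm.trans_le (le_cantorFun hca ?_)
  rw [ternaryValue_eq hca]
  change (2 * c + ternaryValue a) / 3 ≤ x
  linarith

lemma cantorFun_nonneg (x : ℝ) : 0 ≤ cantorFun x :=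
  Real.sSup_nonneg (by rintro _ ⟨a, -, rfl, -⟩; exact binaryValue_nonneg a)

lemma cantorFun_le_one (x : ℝ) : cantorFun x ≤ 1 :=
  cantorFun_le zero_le_one fun _ ha _ ↦ binaryValue_le_one ha

lemma cantorFun_eq_zero {x : ℝ} (hx : x < 0) : cantorFun x = 0 :=
  (cantorFun_le le_rfl fun a _ h ↦ by linarith [ternaryValue_nonneg a]).antisymm
    (cantorFun_nonneg x)

lemma cantorFun_eq_one {x : ℝ} (hx : 1 ≤ x) : cantorFun x = 1 :=
  (cantorFun_le_one x).antisymm <|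
    binaryValue_one ▸ le_cantorFun (fun _ ↦ le_rfl) (ternaryValue_one.trans_le hx)

lemma cantorFun_eq_half_add (x : ℝ) :
    cantorFun x = (cantorFun (3 * x) + cantorFun (3 * x - 2)) / 2 := by
  have hrhs := add_nonneg (cantorFun_nonneg (3 * x)) (cantorFun_nonneg (3 * x - 2))
  refine le_antisymm (cantorFun_le (by linarith) fun a ha hx ↦ ?_) ?_
  · have htail : ∀ n, a (n + 1) ≤ 1 := fun n ↦ ha (n + 1)
    have htail0 := ternaryValue_nonneg fun n ↦ a (n + 1)
    rw [binaryValue_eq ha]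
    rw [ternaryValue_eq ha] at hx
    rcases Nat.le_one_iff_eq_zero_or_eq_one.1 (ha 0) with h0 | h0 <;> rw [h0] at hx ⊢ <;>
      push_cast at hx ⊢
    · linarith [le_cantorFun htail (x := 3 * x) (by linarith), cantorFun_nonneg (3 * x - 2)]
    · rw [cantorFun_eq_one (by linarith : 1 ≤ 3 * x)]
      linarith [le_cantorFun htail (x := 3 * x - 2) (by linarith)]
  · rcases lt_or_ge (3 * x - 2) 0 with hx | hx
    · have : cantorFun (3 * x) ≤ 2 * cantorFun x :=
        cantorFun_le (by linarith [cantorFun_nonneg x]) fun a ha h ↦ by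
          linarith [half_add_le_cantorFun zero_le_one ha (x := x) (by push_cast; linarith)]
      rw [cantorFun_eq_zero hx]
      linarith
    · have hhalf : 1 / 2 ≤ cantorFun x := by
        simpa [binaryValue] using half_add_le_cantorFun le_rfl (a := fun _ ↦ 0)
          (fun _ ↦ zero_le_one) (x := x) (by simp [ternaryValue]; linarith)
      have : cantorFun (3 * x - 2) ≤ 2 * cantorFun x - 1 :=
        cantorFun_le (by linarith) fun a ha h ↦ by
          linarith [half_add_le_cantorFun le_rfl ha (x := x) (by push_cast; linarith)]
      rw [cantorFun_eq_one (by linarith : 1 ≤ 3 * x)]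
      linarith

lemma cantorEquation_cantorFun : CantorEquation cantorFun :=
  ⟨cantorFun_nonneg, cantorFun_le_one, fun _ ↦ cantorFun_eq_zero, fun _ ↦ cantorFun_eq_one,
    cantorFun_eq_half_add⟩

end CantorFunction

noncomputable def cantorMap (b : Bool) (x : ℝ) : ℝ := (cond b 2 0 + x) / 3

lemma cantorMap_false : cantorMap false = (· / 3) := by
  funext x; simp [cantorMap]

lemma cantorMap_true : cantorMap true = fun x ↦ (2 + x) / 3 := rfl

lemma cantorMap_eq_homothety (b : Bool) :
    cantorMap b = AffineMap.homothety (cond b 1 0 : ℝ) (3⁻¹ : ℝ) := by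
  funext x
  cases b <;> simp [cantorMap, AffineMap.homothety_apply] <;> ring

lemma lipschitzWith_cantorMap (b : Bool) : LipschitzWith 3⁻¹ (cantorMap b) :=
  LipschitzWith.of_dist_le_mul fun x y ↦ by
    simp only [cantorMap, Real.dist_eq, NNReal.coe_inv, NNReal.coe_ofNat]
    rw [← sub_div, add_sub_add_left_eq_sub, abs_div, abs_of_pos (by norm_num : (0 : ℝ) < 3),
      div_eq_inv_mul]

lemma measurable_cantorMap (b : Bool) : Measurable (cantorMap b) :=
  (lipschitzWith_cantorMap b).continuous.measurable

lemma preCantorSet_succ_eq_union (n : ℕ) :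
    preCantorSet (n + 1) =
      cantorMap false '' preCantorSet n ∪ cantorMap true '' preCantorSet n := by
  rw [cantorMap_false, cantorMap_true, preCantorSet_succ]

lemma cantorSet_eq_union :
    cantorSet = cantorMap false '' cantorSet ∪ cantorMap true '' cantorSet := by
  rw [cantorMap_false, cantorMap_true]
  exact cantorSet_eq_union_halves

lemma disjoint_cantorMap_image_cantorSet :
    Disjoint (cantorMap false '' cantorSet) (cantorMap true '' cantorSet) := by
  rw [Set.disjoint_left]
  rintro _ ⟨x, hx, rfl⟩ ⟨y, hy, hxy⟩
  have hx1 := (cantorSet_subset_unitInterval hx).2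
  have hy0 := (cantorSet_subset_unitInterval hy).1
  simp only [cantorMap, cond_true, cond_false] at hxy
  linarith

lemma hausdorffMeasure_cantorMap_image (b : Bool) (A : Set ℝ) :
    μH[cantorDim] (cantorMap b '' A) = 2⁻¹ * μH[cantorDim] A := by
  have hnorm : ‖(3⁻¹ : ℝ)‖₊ ^ cantorDim = 2⁻¹ := by
    rw [← NNReal.coe_inj, NNReal.coe_rpow, coe_nnnorm, Real.norm_eq_abs, abs_of_pos (by norm_num),
      inv_three_rpow_cantorDim, NNReal.coe_inv, NNReal.coe_ofNat]
  rw [cantorMap_eq_homothety, hausdorffMeasure_homothety_image cantorDim_pos.le _ (by norm_num),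
    hnorm, ENNReal.smul_def, smul_eq_mul, ENNReal.coe_inv two_ne_zero, ENNReal.coe_ofNat]

noncomputable def cantorHutchinson (μ : Measure ℝ) : Measure ℝ :=
  (2⁻¹ : ℝ≥0∞) • (μ.map (cantorMap false) + μ.map (cantorMap true))

def IsCantorSelfSimilar (μ : Measure ℝ) : Prop := cantorHutchinson μ = μ

lemma cantorHutchinson_apply (μ : Measure ℝ) {s : Set ℝ} (hs : MeasurableSet s) :
    cantorHutchinson μ s = 2⁻¹ * (μ (cantorMap false ⁻¹' s) + μ (cantorMap true ⁻¹' s)) := by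
  simp [cantorHutchinson, Measure.map_apply (measurable_cantorMap _) hs, mul_add]

lemma cantorHutchinson_Iic (μ : Measure ℝ) (x : ℝ) :
    cantorHutchinson μ (Iic x) = 2⁻¹ * (μ (Iic (3 * x)) + μ (Iic (3 * x - 2))) := by
  have h : ∀ b, cantorMap b ⁻¹' Iic x = Iic (3 * x - cond b 2 0) := fun b ↦ by
    ext y
    simp only [mem_preimage, mem_Iic, cantorMap, div_le_iff₀ (three_pos : (0 : ℝ) < 3)]
    constructor <;> intro <;> linarith
  rw [cantorHutchinson_apply μ measurableSet_Iic, h, h, cond_false, cond_true, sub_zero]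

lemma cantorHutchinson_smul (c : ℝ≥0∞) (μ : Measure ℝ) :
    cantorHutchinson (c • μ) = c • cantorHutchinson μ := by
  simp only [cantorHutchinson, Measure.map_smul, ← smul_add, smul_comm c]

section Support

variable {μ : Measure ℝ} [IsProbabilityMeasure μ]

lemma cdf_eq_zero_of_neg (h01 : μ (Icc 0 1) = 1) {x : ℝ} (hx : x < 0) : cdf μ x = 0 := by
  have hnull : μ (Icc 0 1)ᶜ = 0 := (prob_compl_eq_zero_iff measurableSet_Icc).2 h01
  rw [cdf_eq_real, measureReal_def,
    measure_mono_null (fun y hy hy' ↦ by linarith [hy'.1, mem_Iic.1 hy]) hnull, ENNReal.toReal_zero]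

lemma cdf_eq_one_of_one_le (h01 : μ (Icc 0 1) = 1) {x : ℝ} (hx : 1 ≤ x) : cdf μ x = 1 := by
  refine (cdf_le_one μ x).antisymm ?_
  rw [cdf_eq_real, measureReal_def, ← ENNReal.toReal_one, ← h01]
  exact ENNReal.toReal_mono (measure_ne_top μ _) (measure_mono fun y hy ↦ hy.2.trans hx)

end Support

namespace IsCantorSelfSimilar

variable {μ ν : Measure ℝ}

lemma smul (h : IsCantorSelfSimilar μ) (c : ℝ≥0∞) : IsCantorSelfSimilar (c • μ) := by
  rw [IsCantorSelfSimilar, cantorHutchinson_smul, h]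

variable [IsProbabilityMeasure μ]

lemma measure_preCantorSet (h : IsCantorSelfSimilar μ) (h01 : μ (Icc 0 1) = 1) (n : ℕ) :
    μ (preCantorSet n) = 1 := by
  induction n with
  | zero => exact h01
  | succ n ih =>
    have hsub : ∀ b, preCantorSet n ⊆ cantorMap b ⁻¹' preCantorSet (n + 1) := fun b ↦ by
      rw [← image_subset_iff, preCantorSet_succ_eq_union]
      cases b
      exacts [subset_union_left, subset_union_right]
    refine prob_le_one.antisymm ?_
    calc (1 : ℝ≥0∞) = 2⁻¹ * (μ (preCantorSet n) + μ (preCantorSet n)) := by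
          rw [ih, one_add_one_eq_two, ENNReal.inv_mul_cancel two_ne_zero ENNReal.ofNat_ne_top]
      _ ≤ cantorHutchinson μ (preCantorSet (n + 1)) := by
          rw [cantorHutchinson_apply μ (isClosed_preCantorSet _).measurableSet]
          gcongr <;> exact hsub _
      _ = μ (preCantorSet (n + 1)) := by rw [h]

lemma measure_cantorSet (h : IsCantorSelfSimilar μ) (h01 : μ (Icc 0 1) = 1) :
    μ cantorSet = 1 := by
  rw [cantorSet, preCantorSet_antitone.measure_iInter
    (fun n ↦ (isClosed_preCantorSet n).measurableSet.nullMeasurableSet) ⟨0, measure_ne_top μ _⟩]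
  simp [h.measure_preCantorSet h01]

lemma cantorEquation_cdf (h : IsCantorSelfSimilar μ) (h01 : μ (Icc 0 1) = 1) :
    CantorEquation (cdf μ) where
  nonneg := cdf_nonneg μ
  le_one := cdf_le_one μ
  eq_zero _ hx := cdf_eq_zero_of_neg h01 hx
  eq_one _ hx := cdf_eq_one_of_one_le h01 hx
  eq_half_add x := by
    have hx := congrArg ENNReal.toReal (congrArg (· (Iic x)) h)
    simp only [cantorHutchinson_Iic, ENNReal.toReal_mul,
      ENNReal.toReal_add (measure_ne_top μ _) (measure_ne_top μ _)] at hx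
    simp only [cdf_eq_real, measureReal_def, ← hx]
    norm_num
    ring

theorem unique [IsProbabilityMeasure ν] (hμ : IsCantorSelfSimilar μ) (hν : IsCantorSelfSimilar ν)
    (hμ01 : μ (Icc 0 1) = 1) (hν01 : ν (Icc 0 1) = 1) : μ = ν :=
  Measure.eq_of_cdf μ ν <| StieltjesFunction.ext fun x ↦
    congrFun ((hμ.cantorEquation_cdf hμ01).unique (hν.cantorEquation_cdf hν01)) x

end IsCantorSelfSimilar

lemma isCantorSelfSimilar_of_cantorEquation_cdf {μ : Measure ℝ} [IsProbabilityMeasure μ]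
    (hF : CantorEquation (cdf μ)) : IsCantorSelfSimilar μ := by
  refine (Measure.ext_of_Iic μ _ fun x ↦ ?_).symm
  rw [cantorHutchinson_Iic, ← ofReal_cdf μ x, ← ofReal_cdf μ (3 * x), ← ofReal_cdf μ (3 * x - 2),
    hF.eq_half_add x, div_eq_inv_mul, ENNReal.ofReal_mul (by norm_num),
    ENNReal.ofReal_add (hF.nonneg _) (hF.nonneg _), ENNReal.ofReal_inv_of_pos two_pos,
    ENNReal.ofReal_ofNat]

lemma measure_le_two_mul_ediam_rpow {μ : Measure ℝ} [IsProbabilityMeasure μ]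
    (hF : CantorEquation (cdf μ)) {A : Set ℝ} (hA : Bornology.IsBounded A) :
    μ A ≤ 2 * Metric.ediam A ^ cantorDim := by
  have hleftLim : Function.leftLim (cdf μ) (sInf A) = cdf μ (sInf A) :=
    (monotone_cdf μ).continuousWithinAt_Iio_iff_leftLim_eq.1
      ((hF.holderWith.continuous cantorDim_pos).continuousWithinAt)
  calc μ A ≤ μ (Icc (sInf A) (sSup A)) :=
        measure_mono (subset_Icc_csInf_csSup hA.bddBelow hA.bddAbove)
    _ = ENNReal.ofReal (cdf μ (sSup A) - cdf μ (sInf A)) := by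
        conv_lhs => rw [← measure_cdf μ]
        rw [StieltjesFunction.measure_Icc, hleftLim]
    _ ≤ edist (cdf μ (sSup A)) (cdf μ (sInf A)) := by
        rw [edist_dist, Real.dist_eq]
        exact ENNReal.ofReal_le_ofReal (le_abs_self _)
    _ ≤ 2 * edist (sSup A) (sInf A) ^ cantorDim := hF.holderWith.edist_le _ _
    _ = 2 * Metric.ediam A ^ cantorDim := by
        rw [Real.ediam_eq hA, edist_dist, Real.dist_eq,
          abs_of_nonneg (sub_nonneg.2 (Real.sInf_le_sSup A hA.bddBelow hA.bddAbove))]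

lemma IsCantorSelfSimilar.inv_two_le_hausdorffMeasure_cantorSet {μ : Measure ℝ}
    [IsProbabilityMeasure μ] (h : IsCantorSelfSimilar μ) (h01 : μ (Icc 0 1) = 1) :
    2⁻¹ ≤ μH[cantorDim] cantorSet := by
  have hle : (2⁻¹ : ℝ≥0∞) • μ ≤ μH[cantorDim] :=
    Measure.le_hausdorffMeasure _ _ 1 one_pos fun A hA ↦ by
      rw [Measure.smul_apply, smul_eq_mul, ENNReal.inv_mul_le_iff two_ne_zero ENNReal.ofNat_ne_top]
      exact measure_le_two_mul_ediam_rpow (h.cantorEquation_cdf h01)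
        (Metric.isBounded_iff_ediam_ne_top.2 (hA.trans_lt ENNReal.one_lt_top).ne)
  simpa [h.measure_cantorSet h01] using hle cantorSet

lemma isCantorSelfSimilar_hausdorffMeasure_restrict_cantorSet :
    IsCantorSelfSimilar ((μH[cantorDim]).restrict cantorSet) := by
  refine Measure.ext fun s hs ↦ ?_
  have hmeas : MeasurableSet (cantorMap true '' cantorSet) :=
    (isCompact_cantorSet.image (lipschitzWith_cantorMap true).continuous).measurableSet
  rw [cantorHutchinson_apply _ hs, Measure.restrict_apply hs,
    Measure.restrict_apply (measurable_cantorMap _ hs),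
    Measure.restrict_apply (measurable_cantorMap _ hs),
    mul_add, ← hausdorffMeasure_cantorMap_image, ← hausdorffMeasure_cantorMap_image,
    image_preimage_inter, image_preimage_inter,
    ← measure_union (disjoint_cantorMap_image_cantorSet.mono inter_subset_right inter_subset_right)
      (hs.inter hmeas),
    ← inter_union_distrib_left, ← cantorSet_eq_union]

noncomputable def cantorPiece : (n : ℕ) → (Fin n → Bool) → Set ℝ
  | 0, _ => cantorSet
  | n + 1, w => cantorMap (w 0) '' cantorPiece n (Fin.tail w)

lemma cantorSet_subset_iUnion_cantorPiece (n : ℕ) : cantorSet ⊆ ⋃ w, cantorPiece n w := by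
  induction n with
  | zero => exact subset_iUnion_of_subset Fin.elim0 subset_rfl
  | succ n ih =>
    have hcons : ∀ b w, cantorMap b '' cantorPiece n w ⊆ ⋃ w', cantorPiece (n + 1) w' :=
      fun b w ↦ subset_iUnion_of_subset (Fin.cons b w) (by simp [cantorPiece])
    intro x hx
    rw [cantorSet_eq_union] at hx
    rcases hx with ⟨y, hy, rfl⟩ | ⟨y, hy, rfl⟩ <;>
    · obtain ⟨w, hw⟩ := mem_iUnion.1 (ih hy)
      exact hcons _ w (mem_image_of_mem _ hw)

lemma ediam_cantorPiece_le (n : ℕ) (w : Fin n → Bool) :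
    Metric.ediam (cantorPiece n w) ≤ 3⁻¹ ^ n := by
  induction n with
  | zero =>
    calc Metric.ediam cantorSet ≤ Metric.ediam (Icc (0 : ℝ) 1) :=
          Metric.ediam_mono cantorSet_subset_unitInterval
      _ = 3⁻¹ ^ 0 := by simp [Real.ediam_Icc]
  | succ n ih =>
    calc Metric.ediam (cantorPiece (n + 1) w)
        ≤ (3⁻¹ : ℝ≥0) * Metric.ediam (cantorPiece n (Fin.tail w)) :=
          (lipschitzWith_cantorMap _).ediam_image_le _
      _ ≤ 3⁻¹ * 3⁻¹ ^ n := by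
          rw [ENNReal.coe_inv three_ne_zero, ENNReal.coe_ofNat]
          gcongr
          exact ih _
      _ = 3⁻¹ ^ (n + 1) := (pow_succ' _ _).symm

lemma hausdorffMeasure_cantorSet_le_one : μH[cantorDim] cantorSet ≤ 1 := by
  have hr : Tendsto (fun n : ℕ ↦ (3⁻¹ : ℝ≥0∞) ^ n) atTop (𝓝 0) :=
    ENNReal.tendsto_pow_atTop_nhds_zero_of_lt_one (by norm_num)
  have hsum : ∀ n, ∑ w : Fin n → Bool, Metric.ediam (cantorPiece n w) ^ cantorDim ≤ 1 := by
    intro n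
    calc ∑ w : Fin n → Bool, Metric.ediam (cantorPiece n w) ^ cantorDim
        ≤ ∑ _w : Fin n → Bool, ((3⁻¹ : ℝ≥0∞) ^ n) ^ cantorDim :=
          Finset.sum_le_sum fun w _ ↦
            ENNReal.rpow_le_rpow (ediam_cantorPiece_le n w) cantorDim_pos.le
      _ = 1 := by
          have hpow : ((3⁻¹ : ℝ≥0∞) ^ n) ^ cantorDim = 2⁻¹ ^ n := by
            rw [← ENNReal.ofReal_ofNat 3, ← ENNReal.ofReal_inv_of_pos three_pos,
              ← ENNReal.ofReal_pow (by norm_num), ENNReal.ofReal_rpow_of_nonneg (by positivity)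
              cantorDim_pos.le, inv_three_pow_rpow_cantorDim, ENNReal.ofReal_pow (by norm_num),
              ENNReal.ofReal_inv_of_pos two_pos, ENNReal.ofReal_ofNat]
          rw [Finset.sum_const, Finset.card_univ, Fintype.card_fun, Fintype.card_bool,
            Fintype.card_fin, nsmul_eq_mul, hpow, Nat.cast_pow, Nat.cast_ofNat, ← mul_pow,
            ENNReal.mul_inv_cancel two_ne_zero ENNReal.ofNat_ne_top, one_pow]
  exact (Measure.hausdorffMeasure_le_liminf_sum _ _ _ hr cantorPiece
    (Eventually.of_forall ediam_cantorPiece_le)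
    (Eventually.of_forall cantorSet_subset_iUnion_cantorPiece)).trans
    (liminf_le_of_le (by isBoundedDefault) fun b hb ↦ (hb.exists).choose_spec.trans (hsum _))

lemma cdf_eq_cantorFun {μ : Measure ℝ} [IsProbabilityMeasure μ]
    (hμ : ∀ x ∈ Icc (0 : ℝ) 1, μ (Icc 0 x) = ENNReal.ofReal (cantorFun x))
    (h01 : μ (Icc 0 1) = 1) : ⇑(cdf μ) = cantorFun := by
  funext x
  rcases lt_or_ge x 0 with hx0 | hx0
  · rw [cdf_eq_zero_of_neg h01 hx0, cantorFun_eq_zero hx0]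
  rcases le_or_gt 1 x with hx1 | hx1
  · rw [cdf_eq_one_of_one_le h01 hx1, cantorFun_eq_one hx1]
  have hIic : Iic x ∩ Icc 0 1 = Icc 0 x := by
    ext y
    simp only [mem_inter_iff, mem_Iic, mem_Icc]
    exact ⟨fun ⟨hyx, hy0, _⟩ ↦ ⟨hy0, hyx⟩, fun ⟨hy0, hyx⟩ ↦ ⟨hyx, hy0, hyx.trans hx1.le⟩⟩
  rw [cdf_eq_real, measureReal_def,
    ← measure_inter_conull ((prob_compl_eq_zero_iff measurableSet_Icc).2 h01), hIic,
    hμ x ⟨hx0, hx1.le⟩, ENNReal.toReal_ofReal (cantorFun_nonneg x)]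

open scoped MeasureTheory in
/-- With s = log 2 / log 3, the s-dimensional Hausdorff measure of the
middle-thirds Cantor set C is positive and finite, and the Cantor–Lebesgue measure μ
(the measure with μ([0,x]) = f_C(x)) equals the normalized restriction H^s|_C / H^s(C). -/
theorem stmt_14 (μ : Measure ℝ) [IsProbabilityMeasure μ]
    (hμ : ∀ x ∈ Icc (0:ℝ) 1, μ (Icc 0 x) = ENNReal.ofReal (cantorFun x))
    (hsupp : μ (Icc (0:ℝ) 1) = 1) :
    0 < μH[Real.log 2 / Real.log 3] cantorSet ∧
    μH[Real.log 2 / Real.log 3] cantorSet < ⊤ ∧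
    μ = (μH[Real.log 2 / Real.log 3] cantorSet)⁻¹ •
        (μH[Real.log 2 / Real.log 3]).restrict cantorSet := by
  rw [show Real.log 2 / Real.log 3 = cantorDim from rfl]
  have hself : IsCantorSelfSimilar μ :=
    isCantorSelfSimilar_of_cantorEquation_cdf (cdf_eq_cantorFun hμ hsupp ▸ cantorEquation_cantorFun)
  have hpos : 0 < μH[cantorDim] cantorSet :=
    (ENNReal.inv_pos.2 ENNReal.ofNat_ne_top).trans_le
      (hself.inv_two_le_hausdorffMeasure_cantorSet hsupp)
  have hfin : μH[cantorDim] cantorSet < ⊤ :=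
    hausdorffMeasure_cantorSet_le_one.trans_lt ENNReal.one_lt_top
  have hnorm : (μH[cantorDim] cantorSet)⁻¹ * μH[cantorDim] cantorSet = 1 :=
    ENNReal.inv_mul_cancel hpos.ne' hfin.ne
  have : IsProbabilityMeasure ((μH[cantorDim] cantorSet)⁻¹ • (μH[cantorDim]).restrict cantorSet) :=
    ⟨by simpa using hnorm⟩
  refine ⟨hpos, hfin, hself.unique (isCantorSelfSimilar_hausdorffMeasure_restrict_cantorSet.smul _)
    hsupp ?_⟩
  rw [Measure.smul_apply, Measure.restrict_apply measurableSet_Icc,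
    inter_eq_right.2 cantorSet_subset_unitInterval, smul_eq_mul, hnorm]
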